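/- Let W ∈ ℝ^{p×p} have nonnegative entries. Then tr(exp(W)) ≥ p, with equality if and only if the directed graph with edge i → j whenever W_{ij} > 0 contains no directed cycle. -/

import Mathlib

/-!
Expanding `tr (exp A) = ∑ₖ tr (Aᵏ) / k!`, the `k = 0` term is the size of `A` and all other terms
are nonnegative. For `k ≥ 1` the diagonal entry `(Aᵏ) i i` is positive exactly when the graph of
positive entries of `A` has a closed walk of length `k` through `i`, so the tail of the series
vanishes iff there is no cycle.
-/

open Matrix
open scoped Nat

namespace Matrix

section Nonneg

variable {n R : Type*} [Fintype n] [DecidableEq n] [Ring R] [LinearOrder R] [IsStrictOrderedRing R]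
  {A : Matrix n n R} (hA : ∀ i j, 0 ≤ A i j)
include hA

lemma pow_succ_apply_pos_iff (k : ℕ) (i j : n) :
    0 < (A ^ (k + 1)) i j ↔ ∃ l, 0 < (A ^ k) i l ∧ 0 < A l j := by
  rw [pow_succ, mul_apply,
    Finset.sum_pos_iff_of_nonneg fun l _ => mul_nonneg (pow_apply_nonneg hA k i l) (hA l j)]
  simp only [Finset.mem_univ, true_and, mul_pos_iff]
  refine exists_congr fun l => or_iff_left ?_
  exact fun h => (pow_apply_nonneg hA k i l).not_gt h.1

lemma exists_pow_succ_apply_pos_iff_transGen (i j : n) :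
    (∃ k, 0 < (A ^ (k + 1)) i j) ↔ Relation.TransGen (fun a b => 0 < A a b) i j := by
  constructor
  · rintro ⟨k, hk⟩
    induction k generalizing j with
    | zero => exact .single (by simpa using hk)
    | succ k ih =>
      obtain ⟨l, hil, hlj⟩ := (pow_succ_apply_pos_iff hA _ i j).1 hk
      exact (ih l hil).tail hlj
  · intro h
    induction h with
    | single hij => exact ⟨0, by simpa using hij⟩
    | tail _ hlj ih =>
      obtain ⟨k, hk⟩ := ih
      exact ⟨k + 1, (pow_succ_apply_pos_iff hA _ i _).2 ⟨_, hk, hlj⟩⟩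

lemma trace_pow_nonneg (k : ℕ) : 0 ≤ trace (A ^ k) :=
  Finset.sum_nonneg fun i _ => pow_apply_nonneg hA k i i

lemma forall_trace_pow_succ_eq_zero_iff :
    (∀ k, trace (A ^ (k + 1)) = 0) ↔ ∀ i, ¬ Relation.TransGen (fun a b => 0 < A a b) i i := by
  have diag_eq_zero_iff (k : ℕ) (i : n) : (A ^ (k + 1)) i i = 0 ↔ ¬ 0 < (A ^ (k + 1)) i i := by
    rw [(pow_apply_nonneg hA _ i i).lt_iff_ne', not_not]
  simp only [trace, diag_apply,
    Finset.sum_eq_zero_iff_of_nonneg fun i _ => pow_apply_nonneg hA _ i i, Finset.mem_univ,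
    true_implies, diag_eq_zero_iff, ← exists_pow_succ_apply_pos_iff_transGen hA, not_exists]
  exact forall_comm

end Nonneg

section Exp

attribute [local instance] Matrix.linftyOpNormedRing Matrix.linftyOpNormedAlgebra

lemma hasSum_trace_exp {n 𝕂 : Type*} [Fintype n] [DecidableEq n] [RCLike 𝕂] (A : Matrix n n 𝕂) :
    HasSum (fun k => (k ! : 𝕂)⁻¹ * trace (A ^ k)) (trace (NormedSpace.exp A)) := by
  have h := (NormedSpace.exp_series_hasSum_exp' (𝕂 := 𝕂) A).map (traceLinearMap n 𝕂 𝕂)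
    continuous_id.matrix_trace
  simp only [Function.comp_def, traceLinearMap_apply, trace_smul, smul_eq_mul] at h
  exact h

end Exp

section NonnegExp

variable {n : Type*} [Fintype n] [DecidableEq n] {A : Matrix n n ℝ}

lemma hasSum_trace_exp_sub_card :
    HasSum (fun k => ((k + 1) ! : ℝ)⁻¹ * trace (A ^ (k + 1)))
      (trace (NormedSpace.exp A) - Fintype.card n) := by
  simpa [trace_one] using (hasSum_nat_add_iff' 1).2 (hasSum_trace_exp A)

variable (hA : ∀ i j, 0 ≤ A i j)
include hA

lemma inv_factorial_mul_trace_pow_nonneg (k : ℕ) : 0 ≤ (k ! : ℝ)⁻¹ * trace (A ^ k) :=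
  mul_nonneg (by positivity) (trace_pow_nonneg hA k)

lemma card_le_trace_exp : (Fintype.card n : ℝ) ≤ trace (NormedSpace.exp A) :=
  sub_nonneg.1 <| hasSum_trace_exp_sub_card.nonneg fun k =>
    inv_factorial_mul_trace_pow_nonneg hA (k + 1)

lemma trace_exp_eq_card_iff :
    trace (NormedSpace.exp A) = Fintype.card n ↔
      ∀ i, ¬ Relation.TransGen (fun a b => 0 < A a b) i i := by
  calc trace (NormedSpace.exp A) = Fintype.card n
      ↔ HasSum (fun k => ((k + 1) ! : ℝ)⁻¹ * trace (A ^ (k + 1))) 0 := by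
        rw [← sub_eq_zero]
        exact ⟨fun h => h ▸ hasSum_trace_exp_sub_card, hasSum_trace_exp_sub_card.unique⟩
    _ ↔ ∀ k, trace (A ^ (k + 1)) = 0 := by
        simp [hasSum_zero_iff_of_nonneg fun k => inv_factorial_mul_trace_pow_nonneg hA (k + 1),
          funext_iff, Nat.factorial_ne_zero]
    _ ↔ _ := forall_trace_pow_succ_eq_zero_iff hA

end NonnegExp

end Matrix

/-- Let `W ∈ ℝ^{p×p}` have nonnegative entries.  Then `tr(exp W) ≥ p`, with
equality iff the directed graph with edge `i → j` whenever `W i j > 0` has no directed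
cycle. -/
theorem stmt4 (p : ℕ) (W : Matrix (Fin p) (Fin p) ℝ)
    (hW : ∀ i j, 0 ≤ W i j) :
    (p : ℝ) ≤ (NormedSpace.exp W).trace ∧
    ((NormedSpace.exp W).trace = p ↔
      ∀ i : Fin p, ¬ Relation.TransGen (fun i j : Fin p => 0 < W i j) i i) := by
  simpa using And.intro (card_le_trace_exp hW) (trace_exp_eq_card_iff hW)
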